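/- arXiv:1906.01059 — 3 statements merged into one kernel-verified Lean document; each statement's English description precedes it below -/
import Mathlib

section
/- Suppose a sequence of complex numbers (a_n)_{n≥0} satisfies a₀ = φ = (1+√5)/2, a₁ = 1, and for all n ≥ 2, (2φ)^n · a_n · n! = ∑_{k=0}^{n} C(n,k) · (k! a_k) · ((n-k)! a_{n-k}) where a_n are interpreted as f^{(n)}(0)/n! — equivalently a_n = (∑_{k=1}^{n-1} C(n,k) k! a_k (n-k)! a_{n-k}) / (n! ((2φ)^n - 2φ)) for n ≥ 2. Then |n! · a_n| ≤ 1 for all n ≥ 1. -/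
/-!
Put `b n = n! a n`. The recurrence says that `b n · ((2φ)^n - 2φ)` is a binomial convolution of
`b 1, …, b (n-1)`. By strong induction all of these have norm at most `1`, so the convolution has
norm at most `∑_{0<k<n} C(n,k) = 2^n - 2`, while `φ ≥ 1` gives `(2φ)^n - 2φ ≥ 2^n - 2 > 0`.
-/

open Finset

theorem Nat.sum_Ico_one_choose (n : ℕ) : ∑ k ∈ Ico 1 n, n.choose k = 2 ^ n - 2 := by
  cases n with
  | zero => rfl
  | succ m =>
    have h := Nat.sum_range_choose (m + 1)
    rw [sum_range_succ, sum_range_succ', Nat.choose_self, Nat.choose_zero_right] at h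
    rw [sum_Ico_eq_sum_range, Nat.add_sub_cancel]
    simp only [Nat.add_comm 1] at *
    omega

theorem norm_natCast_le_self {R : Type*} [SeminormedRing R] [NormOneClass R] (m : ℕ) :
    ‖(m : R)‖ ≤ m := by
  simpa using norm_nsmul_le (a := (1 : R)) (n := m)

theorem norm_sum_choose_mul_le {𝕜 : Type*} [NormedDivisionRing 𝕜] {b : ℕ → 𝕜} {n : ℕ}
    (hn : 1 ≤ n) (hb : ∀ k ∈ Ico 1 n, ‖b k‖ ≤ 1) :
    ‖∑ k ∈ Ico 1 n, (n.choose k : 𝕜) * b k * b (n - k)‖ ≤ 2 ^ n - 2 := by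
  have h2n : 2 ≤ 2 ^ n := by simpa using Nat.pow_le_pow_right two_pos hn
  calc ‖∑ k ∈ Ico 1 n, (n.choose k : 𝕜) * b k * b (n - k)‖
      ≤ ∑ k ∈ Ico 1 n, ‖(n.choose k : 𝕜) * b k * b (n - k)‖ := norm_sum_le _ _
    _ ≤ ∑ k ∈ Ico 1 n, (n.choose k : ℝ) := by
        refine sum_le_sum fun k hk => ?_
        have hk' : n - k ∈ Ico 1 n := by simp only [mem_Ico] at hk ⊢; omega
        rw [norm_mul, norm_mul, mul_assoc, ← mul_one (n.choose k : ℝ)]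
        gcongr
        exacts [norm_natCast_le_self _, mul_le_one₀ (hb k hk) (norm_nonneg _) (hb _ hk')]
    _ = 2 ^ n - 2 := by
        rw [← Nat.cast_sum, Nat.sum_Ico_one_choose, Nat.cast_sub h2n]
        push_cast
        ring

theorem two_pow_sub_two_pos {n : ℕ} (hn : 2 ≤ n) : (0 : ℝ) < 2 ^ n - 2 := by
  have : (2 : ℝ) ^ 2 ≤ 2 ^ n := pow_le_pow_right₀ one_le_two hn
  linarith

theorem norm_le_one_of_mul_eq_sum_choose_mul {𝕜 : Type*} [NormedDivisionRing 𝕜] {b d : ℕ → 𝕜}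
    (h1 : ‖b 1‖ ≤ 1) (hd : ∀ n ≥ 2, (2 : ℝ) ^ n - 2 ≤ ‖d n‖)
    (hrec : ∀ n ≥ 2, b n * d n = ∑ k ∈ Ico 1 n, (n.choose k : 𝕜) * b k * b (n - k)) :
    ∀ n ≥ 1, ‖b n‖ ≤ 1 := by
  intro n hn
  induction n using Nat.strong_induction_on with
  | _ n ih =>
    obtain rfl | hn2 := hn.eq_or_lt
    · exact h1
    have hsum := norm_sum_choose_mul_le hn fun k hk => ih k (mem_Ico.1 hk).2 (mem_Ico.1 hk).1
    rw [← hrec n hn2, norm_mul] at hsum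
    refine (mul_le_iff_le_one_left (two_pow_sub_two_pos hn2)).1 ?_
    calc ‖b n‖ * (2 ^ n - 2) ≤ ‖b n‖ * ‖d n‖ := by gcongr; exact hd n hn2
      _ ≤ 2 ^ n - 2 := hsum

theorem two_pow_sub_two_le_two_mul_pow_sub {x : ℝ} (hx : 1 ≤ x) {n : ℕ} (hn : 1 ≤ n) :
    (2 : ℝ) ^ n - 2 ≤ (2 * x) ^ n - 2 * x := by
  have hxn : x ≤ x ^ n := le_self_pow₀ hx (by omega)
  have h2n : (2 : ℝ) ≤ 2 ^ n := by simpa using pow_le_pow_right₀ one_le_two hn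
  rw [mul_pow]
  nlinarith

theorem taylor_coeffs_bounded_general (φ : ℝ) (hφ : φ = (1 + Real.sqrt 5) / 2)
    (a : ℕ → ℂ) (h1 : a 1 = 1)
    (hrec : ∀ n ≥ 2, a n =
      (∑ k ∈ Finset.Ico 1 n, (n.choose k : ℂ) * ((k.factorial : ℂ) * a k) *
        (((n - k).factorial : ℂ) * a (n - k))) /
      ((n.factorial : ℂ) * ((2 * φ : ℂ) ^ n - 2 * φ))) :
    ∀ n ≥ 1, ‖(n.factorial : ℂ) * a n‖ ≤ 1 := by
  have hφ1 : 1 ≤ φ := by rw [hφ]; exact Real.one_lt_goldenRatio.le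
  have hden (n : ℕ) : (2 * φ : ℂ) ^ n - 2 * φ = (((2 * φ) ^ n - 2 * φ : ℝ) : ℂ) := by push_cast; ring
  refine norm_le_one_of_mul_eq_sum_choose_mul (b := fun n => (n.factorial : ℂ) * a n)
    (d := fun n => (2 * φ : ℂ) ^ n - 2 * φ)
    (by simp [h1]) (fun n hn => ?_) (fun n hn => ?_)
  · rw [hden, Complex.norm_real, Real.norm_eq_abs]
    exact (two_pow_sub_two_le_two_mul_pow_sub hφ1 (by omega)).trans (le_abs_self _)
  · have hD : (2 * φ : ℂ) ^ n - 2 * φ ≠ 0 := by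
      rw [hden, Complex.ofReal_ne_zero]
      exact ((two_pow_sub_two_pos hn).trans_le
        (two_pow_sub_two_le_two_mul_pow_sub hφ1 (by omega))).ne'
    rw [hrec n hn, mul_div_assoc', mul_div_mul_left _ _ (Nat.cast_ne_zero.2 n.factorial_ne_zero),
      div_mul_cancel₀ _ hD]

theorem taylor_coeffs_bounded (φ : ℝ) (hφ : φ = (1 + Real.sqrt 5) / 2)
    (a : ℕ → ℂ) (h0 : a 0 = (φ : ℂ)) (h1 : a 1 = 1)
    (hrec : ∀ n ≥ 2, a n =
      (∑ k ∈ Finset.Ico 1 n, (n.choose k : ℂ) * ((k.factorial : ℂ) * a k) *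
        (((n - k).factorial : ℂ) * a (n - k))) /
      ((n.factorial : ℂ) * ((2 * φ : ℂ) ^ n - 2 * φ))) :
    ∀ n ≥ 1, ‖(n.factorial : ℂ) * a n‖ ≤ 1 :=
  taylor_coeffs_bounded_general φ hφ a h1 hrec
end

section
/- If f is entire with f(2φz) = f(z)² − 1, f(0) = φ, f'(0) = 1, then the infinite product ∏_{n=1}^{∞} φ^{-1} f((2φ)^{-n} z) converges and equals f'(z) for every z ∈ ℂ. -/
/-!
Differentiating `f (2φz) = f z ^ 2 - 1` gives `f' z = φ⁻¹ f (z / 2φ) f' (z / 2φ)`. Iterating this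
`N` times writes `f' z` as the `N`-th partial product times `f' ((2φ)⁻ᴺ z)`, and the last factor
tends to `f' 0 = 1` because `(2φ)⁻ᴺ z → 0` and `f'` is continuous.
-/

open Filter Topology Finset

theorem eq_prod_Icc_mul_of_eq_mul_comp {α M : Type*} [CommMonoid M]
    {σ : α → α} {h g : α → M} (hg : ∀ x, g x = h (σ x) * g (σ x)) (x : α) (N : ℕ) :
    g x = (∏ n ∈ Icc 1 N, h (σ^[n] x)) * g (σ^[N] x) := by
  induction N with
  | zero => simp
  | succ N ih =>
    rw [prod_Icc_succ_top (Nat.le_add_left 1 N), ih, hg (σ^[N] x),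
      ← Function.iterate_succ_apply' σ N x]
    ac_rfl

theorem tendsto_div_of_forall_eq_mul {X K : Type*} [TopologicalSpace X] [Field K]
    [TopologicalSpace K] [IsTopologicalDivisionRing K] [T1Space K]
    {g : X → K} {x₀ : X} (hg : ContinuousAt g x₀) (hg₀ : g x₀ ≠ 0)
    {x : ℕ → X} (hx : Tendsto x atTop (𝓝 x₀)) {P : ℕ → K} {c : K}
    (hP : ∀ N, c = P N * g (x N)) :
    Tendsto P atTop (𝓝 (c / g x₀)) := by
  have hgx : Tendsto (g ∘ x) atTop (𝓝 (g x₀)) := hg.tendsto.comp hx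
  refine (tendsto_const_nhds.div hgx hg₀).congr' ?_
  filter_upwards [hgx.eventually_ne hg₀] with N hN
  rw [Function.comp_apply] at hN
  simp only [Pi.div_apply, Function.comp_apply]
  rw [div_eq_iff hN, hP N]

theorem deriv_eq_div_mul_of_comp_mul_eq_sq_sub_one {𝕜 : Type*} [NontriviallyNormedField 𝕜]
    {f : 𝕜 → 𝕜} (hf : Differentiable 𝕜 f) {a : 𝕜} (ha : a ≠ 0)
    (heq : ∀ z, f (a * z) = f z ^ 2 - 1) (z : 𝕜) :
    deriv f z = 2 / a * f (a⁻¹ * z) * deriv f (a⁻¹ * z) := by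
  have hderiv : a * deriv f (a * (a⁻¹ * z)) = 2 * f (a⁻¹ * z) * deriv f (a⁻¹ * z) := by
    rw [← smul_eq_mul, ← deriv_comp_mul_left, funext heq, deriv_sub_const,
      deriv_fun_pow (hf _)]
    ring
  rw [mul_inv_cancel_left₀ ha] at hderiv
  apply mul_left_cancel₀ ha
  rw [hderiv]
  field_simp

theorem derivative_infinite_product_general (φ : ℝ) (hφ : φ = (1 + Real.sqrt 5) / 2)
    (f : ℂ → ℂ) (hf : Differentiable ℂ f)
    (heq : ∀ z : ℂ, f (2 * φ * z) = f z ^ 2 - 1)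
    (h1 : deriv f 0 = 1) :
    ∀ z : ℂ, Filter.Tendsto
      (fun N => ∏ n ∈ Finset.Icc 1 N, (φ : ℂ)⁻¹ * f (((2 * φ : ℂ)⁻¹) ^ n * z))
      Filter.atTop (nhds (deriv f z)) := by
  intro z
  have hφ_gt_one : 1 < φ := hφ ▸ Real.one_lt_goldenRatio
  have hφ_pos : 0 < φ := by linarith
  have h2φ : (2 * φ : ℂ) ≠ 0 := by exact_mod_cast (by positivity : 2 * φ ≠ 0)
  have hq : ‖(2 * φ : ℂ)⁻¹‖ < 1 := by
    rw [norm_inv, norm_mul, Complex.norm_ofNat, Complex.norm_of_nonneg hφ_pos.le]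
    exact inv_lt_one_of_one_lt₀ (by linarith)
  have hstep : ∀ w, deriv f w =
      (φ : ℂ)⁻¹ * f ((2 * φ : ℂ)⁻¹ * w) * deriv f ((2 * φ : ℂ)⁻¹ * w) := by
    intro w
    rw [deriv_eq_div_mul_of_comp_mul_eq_sq_sub_one hf h2φ heq w]
    field_simp
  have hprod := eq_prod_Icc_mul_of_eq_mul_comp (σ := ((2 * φ : ℂ)⁻¹ * ·))
    (h := fun w => (φ : ℂ)⁻¹ * f w) (g := deriv f) (fun w => by rw [hstep w, mul_assoc]) z
  simp only [mul_left_iterate_apply] at hprod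
  have hx : Tendsto (fun N : ℕ => (2 * φ : ℂ)⁻¹ ^ N * z) atTop (𝓝 0) := by
    simpa using (tendsto_pow_atTop_nhds_zero_of_norm_lt_one hq).mul_const z
  simpa [h1] using tendsto_div_of_forall_eq_mul
    (hf.contDiff (n := 1)).continuous_deriv_one.continuousAt (h1 ▸ one_ne_zero) hx hprod

theorem derivative_infinite_product (φ : ℝ) (hφ : φ = (1 + Real.sqrt 5) / 2)
    (f : ℂ → ℂ) (hf : Differentiable ℂ f)
    (heq : ∀ z : ℂ, f (2 * φ * z) = f z ^ 2 - 1)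
    (h0 : f 0 = (φ : ℂ)) (h1 : deriv f 0 = 1) :
    ∀ z : ℂ, Filter.Tendsto
      (fun N => ∏ n ∈ Finset.Icc 1 N, (φ : ℂ)⁻¹ * f (((2 * φ : ℂ)⁻¹) ^ n * z))
      Filter.atTop (nhds (deriv f z)) :=
  derivative_infinite_product_general φ hφ f hf heq h1
end

section
/- If f is entire with f(2φz) = f(z)² − 1, f(0) = φ, f'(0) = 1, and all Taylor coefficients of f at 0 are positive, then f is strictly increasing on [0,∞) and f has a zero on the negative real axis. -/
/-!
Positivity of the Taylor coefficients makes `f` strictly increasing on `[0, ∞)`. For the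
zero, let `g` be `f` restricted to `ℝ` and suppose `g` has no negative zero. Then `g > 0` on
`(-∞, 0)` by the intermediate value theorem, hence `g > 1` there, since
`g (2φx) = g x ^ 2 - 1`. As `g' 0 > 0`, some `x₀ < 0` has `1 < g x₀ < φ`, and the orbit of
`g x₀` under `t ↦ t ^ 2 - 1`, which is `g` along `(2φ)ⁿ x₀`, moves away from the fixed point
`φ` and drops below `1`.
-/

open Filter Set Topology

lemma Complex.hasSum_re_taylorSeries_of_entire {f : ℂ → ℂ} (hf : Differentiable ℂ f)
    (x : ℝ) :
    HasSum (fun n : ℕ ↦ (iteratedDeriv n f 0).re / n.factorial * x ^ n) (f x).re := by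
  convert Complex.hasSum_re (Complex.hasSum_taylorSeries_of_entire hf 0 x) using 2 with n
  simp only [smul_eq_mul, sub_zero]
  norm_cast
  rw [← Complex.ofReal_natCast, ← Complex.ofReal_inv, Complex.re_ofReal_mul,
    Complex.re_ofReal_mul]
  ring

lemma strictMonoOn_Ici_of_hasSum_pow {a : ℕ → ℝ} {g : ℝ → ℝ}
    (hg : ∀ x, 0 ≤ x → HasSum (fun n ↦ a n * x ^ n) (g x))
    (ha : ∀ n ≥ 1, 0 ≤ a n) (ha₁ : 0 < a 1) : StrictMonoOn g (Ici 0) := by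
  intro x hx y hy hxy
  refine hasSum_lt (i := 1) (fun n ↦ ?_) (by simpa using mul_lt_mul_of_pos_left hxy ha₁)
    (hg x hx) (hg y hy)
  rcases Nat.eq_zero_or_pos n with rfl | hn
  · simp
  · exact mul_le_mul_of_nonneg_left (pow_le_pow_left₀ hx hxy.le n) (ha n hn)

lemma HasDerivAt.exists_lt_and_apply_lt {g : ℝ → ℝ} {d x : ℝ} (hg : HasDerivAt g d x)
    (hd : 0 < d) : ∃ y < x, g y < g x := by
  have hslope : ∀ᶠ y in 𝓝[<] x, 0 < slope g x y :=
    ((hasDerivAt_iff_tendsto_slope.mp hg).eventually (eventually_gt_nhds hd)).filter_mono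
      (nhdsLT_le_nhdsNE x)
  obtain ⟨y, hpos, hy⟩ := (hslope.and self_mem_nhdsWithin).exists
  exact ⟨y, hy, (slope_pos_iff_gt hy).mp hpos⟩

/-- The orbit of a point of `(1, φ)` under `t ↦ t ^ 2 - 1` leaves `(1, ∞)`: each step below the
fixed point `φ` lowers it by at least `(φ - t) * φ`. -/
lemma exists_iterate_sq_sub_one_le_one {φ t : ℝ} (hφ : φ ^ 2 = φ + 1) (ht : 1 < t)
    (htφ : t < φ) : ∃ n, (fun s : ℝ ↦ s ^ 2 - 1)^[n] t ≤ 1 := by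
  by_contra! hgt
  set δ := (φ - t) * φ
  have hδ_pos : 0 < δ := mul_pos (by linarith) (by linarith)
  have hdecr : ∀ n : ℕ, (fun s : ℝ ↦ s ^ 2 - 1)^[n] t ≤ t - n * δ := by
    intro n
    induction n with
    | zero => simp
    | succ n ih =>
      rw [Function.iterate_succ_apply']
      set s := (fun s : ℝ ↦ s ^ 2 - 1)^[n] t
      have hs : 1 < s := hgt n
      have hnδ : 0 ≤ n * δ := by positivity
      have hstep : δ ≤ (φ - s) * (s + φ - 1) :=
        mul_le_mul (by linarith) (by linarith) (by linarith) (by linarith)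
      have hfactor : s ^ 2 - 1 = s - (φ - s) * (s + φ - 1) := by linear_combination hφ
      push_cast
      linarith
  obtain ⟨n, hn⟩ := exists_nat_gt ((t - 1) / δ)
  rw [div_lt_iff₀ hδ_pos] at hn
  linarith [hgt n, hdecr n]

lemma exists_neg_zero_of_apply_mul_eq_sq_sub_one {g : ℝ → ℝ} {c x₀ : ℝ}
    (hg : Continuous g) (hc : 0 < c) (heq : ∀ x, g (c * x) = g x ^ 2 - 1) (hg₀ : 0 < g 0)
    (hx₀ : x₀ < 0) (hgx₀ : g x₀ < g 0) : ∃ x < 0, g x = 0 := by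
  by_contra! hne
  have hpos : ∀ x < 0, 0 < g x := by
    intro x hx
    by_contra! hle
    obtain ⟨y, hy, hgy⟩ := intermediate_value_Icc hx.le hg.continuousOn ⟨hle, hg₀.le⟩
    exact hne y (hy.2.lt_of_ne (by rintro rfl; linarith)) hgy
  have hgt_one : ∀ x < 0, 1 < g x := by
    intro x hx
    nlinarith [heq x, hpos x hx, hpos (c * x) (mul_neg_of_pos_of_neg hc hx)]
  have horbit : ∀ n : ℕ, g (c ^ n * x₀) = (fun s : ℝ ↦ s ^ 2 - 1)^[n] (g x₀) := by
    intro n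
    induction n with
    | zero => simp
    | succ n ih => rw [Function.iterate_succ_apply', ← ih, pow_succ', mul_assoc, heq]
  have hfixed : g 0 ^ 2 = g 0 + 1 := by linarith [mul_zero c ▸ heq 0]
  obtain ⟨n, hn⟩ := exists_iterate_sq_sub_one_le_one hfixed (hgt_one x₀ hx₀) hgx₀
  rw [← horbit] at hn
  exact hn.not_gt (hgt_one _ (mul_neg_of_pos_of_neg (by positivity) hx₀))

theorem increasing_and_negative_zero_general (φ : ℝ) (hφ : φ = (1 + Real.sqrt 5) / 2)
    (f : ℂ → ℂ) (hf : Differentiable ℂ f)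
    (heq : ∀ z : ℂ, f (2 * φ * z) = f z ^ 2 - 1)
    (h0 : f 0 = (φ : ℂ))
    (hreal : ∀ x : ℝ, (f x).im = 0)
    (hpos : ∀ n ≥ 1, 0 < (iteratedDeriv n f 0).re) :
    StrictMonoOn (fun x : ℝ => (f x).re) (Set.Ici 0) ∧
    ∃ x : ℝ, x < 0 ∧ f x = 0 := by
  set g : ℝ → ℝ := fun x ↦ (f x).re with hg
  have hfg : ∀ x : ℝ, f x = g x := fun x ↦ Complex.ext rfl (hreal x)
  refine ⟨strictMonoOn_Ici_of_hasSum_pow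
    (fun x _ ↦ Complex.hasSum_re_taylorSeries_of_entire hf x)
    (fun n hn ↦ (div_pos (hpos n hn) (by positivity)).le) (by simpa using hpos 1 le_rfl), ?_⟩
  have hφ_pos : 0 < φ := by rw [hφ]; positivity
  have hg₀ : g 0 = φ := by simp [hg, h0]
  have hgeq : ∀ x, g (2 * φ * x) = g x ^ 2 - 1 := by
    intro x
    have h := heq x
    rw [hfg, ← Complex.ofReal_ofNat, ← Complex.ofReal_mul, ← Complex.ofReal_mul, hfg] at h
    exact_mod_cast h
  have hcont : Continuous g :=
    Complex.continuous_re.comp (hf.continuous.comp Complex.continuous_ofReal)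
  have hderiv : HasDerivAt g (iteratedDeriv 1 f 0).re 0 := by
    rw [iteratedDeriv_one]
    exact HasDerivAt.real_of_complex (by simpa using (hf 0).hasDerivAt)
  obtain ⟨x₀, hx₀, hgx₀⟩ := hderiv.exists_lt_and_apply_lt (hpos 1 le_rfl)
  obtain ⟨x, hx, hgx⟩ := exists_neg_zero_of_apply_mul_eq_sq_sub_one hcont (by positivity) hgeq
    (hg₀ ▸ hφ_pos) hx₀ hgx₀
  exact ⟨x, hx, by rw [hfg, hgx, Complex.ofReal_zero]⟩

theorem increasing_and_negative_zero (φ : ℝ) (hφ : φ = (1 + Real.sqrt 5) / 2)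
    (f : ℂ → ℂ) (hf : Differentiable ℂ f)
    (heq : ∀ z : ℂ, f (2 * φ * z) = f z ^ 2 - 1)
    (h0 : f 0 = (φ : ℂ)) (h1 : deriv f 0 = 1)
    (hreal : ∀ x : ℝ, (f x).im = 0)
    (hpos : ∀ n ≥ 1, 0 < (iteratedDeriv n f 0).re) :
    StrictMonoOn (fun x : ℝ => (f x).re) (Set.Ici 0) ∧
    ∃ x : ℝ, x < 0 ∧ f x = 0 :=
  increasing_and_negative_zero_general φ hφ f hf heq h0 hreal hpos
end
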